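/- arXiv:2001.01721 — 2 statements merged into one kernel-verified Lean document; each statement's English description precedes it below -/
import Mathlib

section
/- Let v ∈ ℚ_p with v ≠ 0 and let s ∈ ℂ satisfy p^{s−1} = 1 (equivalently s = 1 + 2πik/ln p for some k ∈ ℤ). Then the function u ↦ (log_p|u|_p − log_p|v|_p) / |u − v|_p^{s+1} is integrable on ℚ_p with respect to μ, and ∫_{ℚ_p} (log_p|u|_p − log_p|v|_p) / |u − v|_p^{s+1} dμ(u) = 0, where log_p|u|_p = −v_p(u). (Hence the Vladimirov derivative D^s annihilates the logarithmic Green's function away from the diagonal.) -/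
open MeasureTheory Real

noncomputable section

variable (p : ℕ) [Fact p.Prime]

instance : MeasurableSpace ℚ_[p] := borel _
instance : BorelSpace ℚ_[p] := ⟨rfl⟩

/-- `ℤ_p = {x : ℚ_p | ‖x‖ ≤ 1}` as a positive compact subset of `ℚ_p`. -/
def zpCompacts : TopologicalSpace.PositiveCompacts ℚ_[p] where
  carrier := Metric.closedBall 0 1
  isCompact' := isCompact_closedBall 0 1
  interior_nonempty' := by
    refine ⟨0, interior_maximal Metric.ball_subset_closedBall Metric.isOpen_ball ?_⟩
    simp

/-- The additive Haar measure `μ` on `ℚ_p`, normalized so that `μ(ℤ_p) = 1`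
(this normalization is `Measure.addHaarMeasure_self`). -/
def padicHaar : Measure ℚ_[p] := Measure.addHaarMeasure (zpCompacts p)

/-- The `p`-adic fractional part `{x}_p`: the rational in `[0,1) ∩ ℤ[1/p]`
with `x - {x}_p ∈ ℤ_p`.  It is computed from the digit expansion of `p^n·x`
where `n = max(0, -v_p(x))`; the `else` branch is never taken. -/
def padicFract (x : ℚ_[p]) : ℚ :=
  if hx : ‖(p : ℚ_[p]) ^ (-x.valuation).toNat * x‖ ≤ 1 then
    ((PadicInt.appr ⟨(p : ℚ_[p]) ^ (-x.valuation).toNat * x, hx⟩ (-x.valuation).toNat : ℕ) : ℚ)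
      / (p : ℚ) ^ (-x.valuation).toNat
  else 0

/-- The standard additive character `χ(x) = e^{2πi{x}_p}` of `ℚ_p`. -/
def padicChar (x : ℚ_[p]) : ℂ :=
  Complex.exp (2 * π * Complex.I * (padicFract p x : ℂ))

/-- The Gelfand–Graev Gamma function `Γ_p(s) = (1 - p^{s-1})/(1 - p^{-s})` of `ℚ_p`. -/
def gammaP (s : ℂ) : ℂ := (1 - (p : ℂ) ^ (s - 1)) / (1 - (p : ℂ) ^ (-s))


/-!
For `u ≠ 0` the integrand only depends on `k = v_p(u)`. Writing `n = v_p(v)`, the ultrametric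
inequality gives `|u - v|_p = p^{-min(k, n)}` when `k ≠ n`, and `p^{s-1} = 1` turns
`|u - v|_p^{s+1}` into `|u - v|_p^2`; so on the sphere `v_p(u) = k`, of Haar measure
`(1 - p⁻¹) p^{-k}` (the ball of radius `p^{-m}` is the disjoint union of `p` translates of the
ball of radius `p^{-m-1}`), the integrand is the constant `(n - k) p^{2 min(k, n)}`. The integral is
therefore `(1 - p⁻¹) p^n ∑_{k ∈ ℤ} (n - k) p^{-|n - k|}`, an absolutely convergent series whose
terms the reflection `k ↦ 2n - k` negates.
-/

open Set Metric Filter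
open scoped ENNReal

instance : (padicHaar p).IsAddHaarMeasure := Measure.isAddHaarMeasure_addHaarMeasure _

section DiscreteValued

variable {X ι E : Type*} [MeasurableSpace X] [MeasurableSpace ι] [Countable ι]
  [MeasurableSingletonClass ι] [NormedAddCommGroup E] {μ : Measure X} {f : X → ι}

theorem map_eq_sum_smul_dirac (hf : Measurable f) :
    μ.map f = Measure.sum fun i ↦ μ (f ⁻¹' {i}) • Measure.dirac i := by
  conv_lhs => rw [← Measure.sum_smul_dirac (μ.map f)]
  simp only [Measure.map_apply hf (measurableSet_singleton _)]

theorem integrable_comp_iff_summable (hf : Measurable f) (hfin : ∀ i, μ (f ⁻¹' {i}) ≠ ∞)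
    (φ : ι → E) :
    Integrable (fun x ↦ φ (f x)) μ ↔ Summable fun i ↦ μ.real (f ⁻¹' {i}) * ‖φ i‖ := by
  rw [← Function.comp_def, ← integrable_map_measure .of_discrete hf.aemeasurable,
    map_eq_sum_smul_dirac hf, integrable_sum_dirac_iff hfin]
  rfl

theorem integral_comp_eq_tsum [NormedSpace ℝ E] [FiniteDimensional ℝ E] (hf : Measurable f)
    (hfin : ∀ i, μ (f ⁻¹' {i}) ≠ ∞) (φ : ι → E) :
    ∫ x, φ (f x) ∂μ = ∑' i, μ.real (f ⁻¹' {i}) • φ i := by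
  rw [← integral_map hf.aemeasurable .of_discrete, map_eq_sum_smul_dirac hf,
    integral_sum_dirac hfin]
  rfl

end DiscreteValued

theorem tsum_eq_zero_of_comp_equiv_eq_neg {β G : Type*} [AddCommGroup G] [TopologicalSpace G]
    [IsTopologicalAddGroup G] [T2Space G] [IsAddTorsionFree G] {f : β → G} (σ : β ≃ β)
    (h : ∀ b, f (σ b) = -f b) : ∑' b, f b = 0 :=
  self_eq_neg.mp <| calc
    ∑' b, f b = ∑' b, f (σ b) := (σ.tsum_eq f).symm
    _ = -∑' b, f b := by simp only [h, tsum_neg]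

theorem summable_natAbs_mul_geometric {R : Type*} [NormedRing R] [HasSummableGeomSeries R]
    {r : R} (hr : ‖r‖ < 1) : Summable fun j : ℤ ↦ (j.natAbs : R) * r ^ j.natAbs := by
  have h := (summable_pow_mul_geometric_of_norm_lt_one 1 hr).congr fun n ↦ by rw [pow_one]
  exact .of_nat_of_neg (by simpa using h) (by simpa using h)

theorem Complex.zpow_cpow_add_one_of_cpow_sub_one_eq_one {x : ℝ} (hx : 0 < x) {s : ℂ}
    (hs : (x : ℂ) ^ (s - 1) = 1) (m : ℤ) : ((x : ℂ) ^ m) ^ (s + 1) = ((x : ℂ) ^ m) ^ 2 := by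
  have hx0 : (x : ℂ) ≠ 0 := Complex.ofReal_ne_zero.mpr hx.ne'
  have harg : (m : ℝ) * (x : ℂ).arg = 0 := by rw [Complex.arg_ofReal_of_nonneg hx.le, mul_zero]
  rw [← Complex.cpow_int_mul' (by rw [harg]; linarith [Real.pi_pos])
      (by rw [harg]; exact Real.pi_pos.le),
    Complex.cpow_int_mul, show s + 1 = s - 1 + 2 by ring, Complex.cpow_add _ _ hx0, hs, one_mul,
    Complex.cpow_ofNat, ← zpow_natCast, ← zpow_natCast, ← zpow_mul, ← zpow_mul, mul_comm]

namespace Padic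

variable {p}

theorem one_lt_prime : (1 : ℝ) < p := mod_cast (Fact.out : p.Prime).one_lt

theorem closedBall_eq_iUnion_closedBall (m : ℤ) :
    closedBall (0 : ℚ_[p]) ((p : ℝ) ^ (-m)) =
      ⋃ a : Fin p, closedBall ((a : ℚ_[p]) * (p : ℚ_[p]) ^ m) ((p : ℝ) ^ (-(m + 1))) := by
  have hp : (p : ℚ_[p]) ≠ 0 := mod_cast (Fact.out : p.Prime).ne_zero
  have hp' : (0 : ℝ) < p := zero_lt_one.trans one_lt_prime
  ext x
  simp only [mem_closedBall, dist_eq_norm, sub_zero, mem_iUnion]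
  constructor
  · intro hx
    set z := x * (p : ℚ_[p]) ^ (-m)
    have hz : ‖z‖ ≤ 1 := calc
      ‖z‖ = ‖x‖ * (p : ℝ) ^ m := by rw [norm_mul, norm_p_zpow, neg_neg]
      _ ≤ (p : ℝ) ^ (-m) * (p : ℝ) ^ m := by gcongr
      _ = 1 := by rw [← zpow_add₀ hp'.ne']; simp
    obtain ⟨n, hn, hzn⟩ := PadicInt.exists_mem_range (⟨z, hz⟩ : ℤ_[p])
    have hzn' : ‖z - n‖ ≤ (p : ℝ) ^ (-1 : ℤ) := by
      rw [norm_le_pow_iff_norm_lt_pow_add_one, neg_add_cancel, zpow_zero]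
      exact PadicInt.mem_nonunits.mp hzn
    refine ⟨⟨n, hn⟩, ?_⟩
    have hx : x - n * (p : ℚ_[p]) ^ m = (z - n) * (p : ℚ_[p]) ^ m := by
      rw [sub_mul, mul_assoc, ← zpow_add₀ hp]
      simp
    rw [hx, norm_mul, norm_p_zpow, neg_add, zpow_add₀ hp'.ne', mul_comm]
    gcongr
  · rintro ⟨a, ha⟩
    have ha' : ‖(a : ℚ_[p]) * (p : ℚ_[p]) ^ m‖ ≤ (p : ℝ) ^ (-m) := by
      rw [norm_mul, norm_p_zpow]
      exact mul_le_of_le_one_left (by positivity) (by simpa using norm_int_le_one (p := p) a)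
    calc ‖x‖ = ‖(x - a * (p : ℚ_[p]) ^ m) + a * (p : ℚ_[p]) ^ m‖ := by rw [sub_add_cancel]
      _ ≤ max ‖x - a * (p : ℚ_[p]) ^ m‖ ‖(a : ℚ_[p]) * (p : ℚ_[p]) ^ m‖ := nonarchimedean _ _
      _ ≤ (p : ℝ) ^ (-m) := max_le (ha.trans (zpow_le_zpow_right₀ one_lt_prime.le (by omega))) ha'

theorem pairwise_disjoint_closedBall (m : ℤ) :
    Pairwise (Function.onFun Disjoint fun a : Fin p ↦
      closedBall ((a : ℚ_[p]) * (p : ℚ_[p]) ^ m) ((p : ℝ) ^ (-(m + 1)))) := by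
  have hp' : (0 : ℝ) < p := zero_lt_one.trans one_lt_prime
  intro a b hab
  refine Set.disjoint_left.mpr fun x hxa hxb ↦ hab ?_
  have h := (IsUltrametricDist.closedBall_eq_of_mem hxa).trans
    (IsUltrametricDist.closedBall_eq_of_mem hxb).symm ▸ mem_closedBall_self (by positivity)
  rw [mem_closedBall, dist_eq_norm, ← sub_mul, norm_mul, norm_p_zpow, neg_add,
    zpow_add₀ hp'.ne', mul_comm] at h
  have hdvd : (p : ℤ) ∣ (a - b : ℤ) := by
    rw [← pow_one (p : ℤ), ← norm_int_le_pow_iff_dvd]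
    simpa using le_of_mul_le_mul_left h (by positivity)
  have := Int.eq_zero_of_abs_lt_dvd hdvd (by rw [abs_lt]; omega)
  omega

theorem valuation_preimage_singleton_diff_zero (k : ℤ) :
    valuation ⁻¹' {k} \ {0} =
      closedBall (0 : ℚ_[p]) ((p : ℝ) ^ (-k)) \ closedBall 0 ((p : ℝ) ^ (-(k + 1))) := by
  ext u
  rcases eq_or_ne u 0 with rfl | hu
  · simp [zpow_nonneg]
  · simp only [Set.mem_sdiff, mem_preimage, mem_singleton_iff, hu, not_false_eq_true, and_true,
      mem_closedBall_zero_iff, norm_eq_zpow_neg_valuation hu,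
      zpow_le_zpow_iff_right₀ one_lt_prime]
    omega

theorem measurable_valuation : Measurable (valuation : ℚ_[p] → ℤ) :=
  measurable_to_countable' fun k ↦ by
    rw [← sdiff_union_inter (valuation ⁻¹' {k}) {0}, valuation_preimage_singleton_diff_zero]
    exact (measurableSet_closedBall.diff measurableSet_closedBall).union
      (subsingleton_singleton.anti inter_subset_right).measurableSet

end Padic

section HaarMeasure

variable {p}

theorem padicHaar_closedBall_eq_mul (m : ℤ) :
    padicHaar p (closedBall 0 ((p : ℝ) ^ (-m))) =
      p * padicHaar p (closedBall 0 ((p : ℝ) ^ (-(m + 1)))) := by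
  rw [Padic.closedBall_eq_iUnion_closedBall, measure_iUnion
    (Padic.pairwise_disjoint_closedBall m) fun _ ↦ measurableSet_closedBall, tsum_fintype]
  simp [Measure.addHaar_closedBall_center]

theorem padicHaar_real_closedBall (m : ℤ) :
    (padicHaar p).real (closedBall 0 ((p : ℝ) ^ (-m))) = (p : ℝ) ^ (-m) := by
  have hp : (p : ℝ) ≠ 0 := (zero_lt_one.trans Padic.one_lt_prime).ne'
  have hrec (m : ℤ) : (padicHaar p).real (closedBall 0 ((p : ℝ) ^ (-m))) =
      p * (padicHaar p).real (closedBall 0 ((p : ℝ) ^ (-(m + 1)))) := by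
    rw [measureReal_def, measureReal_def, padicHaar_closedBall_eq_mul, ENNReal.toReal_mul,
      ENNReal.toReal_natCast]
  induction m using Int.induction_on with
  | zero =>
    rw [neg_zero, zpow_zero, measureReal_def, padicHaar]
    exact congrArg ENNReal.toReal (Measure.addHaarMeasure_self (K₀ := zpCompacts p))
  | succ k ih =>
    apply mul_left_cancel₀ hp
    rw [← hrec, ih, neg_add, zpow_add₀ hp, zpow_neg_one]
    field_simp
  | pred k ih =>
    rw [hrec, sub_add_cancel, ih, ← zpow_one_add₀ hp]
    ring_nf

theorem padicHaar_valuation_preimage (k : ℤ) :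
    padicHaar p (Padic.valuation ⁻¹' {k}) = ENNReal.ofReal ((1 - (p : ℝ)⁻¹) * (p : ℝ) ^ (-k)) := by
  have hp : (p : ℝ) ≠ 0 := (zero_lt_one.trans Padic.one_lt_prime).ne'
  have hsub : closedBall (0 : ℚ_[p]) ((p : ℝ) ^ (-(k + 1))) ⊆ closedBall 0 ((p : ℝ) ^ (-k)) :=
    closedBall_subset_closedBall (zpow_le_zpow_right₀ Padic.one_lt_prime.le (by omega))
  rw [← measure_sdiff_null (measure_singleton 0), Padic.valuation_preimage_singleton_diff_zero,
    ← ofReal_measureReal (measure_ne_top_of_subset sdiff_subset measure_closedBall_lt_top.ne),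
    measureReal_sdiff hsub measurableSet_closedBall measure_closedBall_lt_top.ne,
    padicHaar_real_closedBall, padicHaar_real_closedBall, neg_add, zpow_add₀ hp, zpow_neg_one]
  ring_nf

theorem padicHaar_valuation_preimage_ne_top (k : ℤ) :
    padicHaar p (Padic.valuation ⁻¹' {k}) ≠ ∞ := by
  rw [padicHaar_valuation_preimage]
  exact ENNReal.ofReal_ne_top

theorem padicHaar_real_valuation_preimage (k : ℤ) :
    (padicHaar p).real (Padic.valuation ⁻¹' {k}) = (1 - (p : ℝ)⁻¹) * (p : ℝ) ^ (-k) := by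
  rw [measureReal_def, padicHaar_valuation_preimage, ENNReal.toReal_ofReal]
  exact mul_nonneg (sub_nonneg.mpr (inv_le_one_of_one_le₀ Padic.one_lt_prime.le))
    (zpow_nonneg (zero_lt_one.trans Padic.one_lt_prime).le _)

end HaarMeasure

/-- The value of `u ↦ (log_p|u|_p - log_p|v|_p) / |u - v|_p^2` on the sphere `v_p(u) = k`,
when `v_p(v) = n`. -/
def logGreenSphereValue (n k : ℤ) : ℂ := ((n - k : ℤ) : ℂ) * (p : ℂ) ^ (2 * min k n)

section LogGreen

variable {p}

theorem integrand_eq_logGreenSphereValue {v u : ℚ_[p]} (hv : v ≠ 0) (hu : u ≠ 0) {s : ℂ}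
    (hs : (p : ℂ) ^ (s - 1) = 1) :
    (((-u.valuation : ℤ) : ℂ) - ((-v.valuation : ℤ) : ℂ)) / (‖u - v‖ : ℂ) ^ (s + 1) =
      logGreenSphereValue p v.valuation u.valuation := by
  have hp : (0 : ℝ) < p := zero_lt_one.trans Padic.one_lt_prime
  rcases eq_or_ne u.valuation v.valuation with hk | hk
  · simp [logGreenSphereValue, hk]
  have hne : ‖u‖ ≠ ‖-v‖ := by
    rw [norm_neg, Padic.norm_eq_zpow_neg_valuation hu, Padic.norm_eq_zpow_neg_valuation hv]
    exact (zpow_right_injective₀ hp Padic.one_lt_prime.ne').ne (by omega)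
  have hnorm : ‖u - v‖ = (p : ℝ) ^ (-min u.valuation v.valuation) := by
    rw [sub_eq_add_neg, Padic.add_eq_max_of_ne hne, norm_neg, Padic.norm_eq_zpow_neg_valuation hu,
      Padic.norm_eq_zpow_neg_valuation hv, ← max_neg_neg,
      (zpow_right_mono₀ Padic.one_lt_prime.le).map_max]
  rw [hnorm, Complex.ofReal_zpow, Complex.zpow_cpow_add_one_of_cpow_sub_one_eq_one hp
    (by simpa using hs), logGreenSphereValue, ← zpow_natCast, ← zpow_mul, div_eq_mul_inv,
    ← zpow_neg]
  push_cast
  ring_nf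

theorem summable_logGreenSphereValue (n : ℤ) :
    Summable fun k ↦ (1 - (p : ℝ)⁻¹) * (p : ℝ) ^ (-k) * ‖logGreenSphereValue p n k‖ := by
  have hp : (0 : ℝ) < p := zero_lt_one.trans Padic.one_lt_prime
  have hr : ‖(p : ℝ)⁻¹‖ < 1 := by
    rw [norm_inv, Real.norm_natCast]; exact inv_lt_one_of_one_lt₀ Padic.one_lt_prime
  refine (((summable_natAbs_mul_geometric hr).comp_injective (sub_left_injective (b := n))).mul_left
    ((1 - (p : ℝ)⁻¹) * (p : ℝ) ^ n)).congr fun k ↦ ?_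
  have hexp : (p : ℝ) ^ (-k) * (p : ℝ) ^ (2 * min k n) =
      (p : ℝ) ^ n * (p : ℝ)⁻¹ ^ (k - n).natAbs := by
    rw [inv_pow, ← zpow_natCast, ← zpow_neg, ← zpow_add₀ hp.ne', ← zpow_add₀ hp.ne']
    congr 1
    omega
  rw [Function.comp_apply, logGreenSphereValue, norm_mul, Complex.norm_intCast, norm_zpow,
    Complex.norm_natCast, Nat.cast_natAbs, Int.cast_abs, Int.cast_sub, Int.cast_sub,
    abs_sub_comm (n : ℝ)]
  linear_combination (1 - (p : ℝ)⁻¹) * |(k : ℝ) - n| * hexp.symm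

theorem tsum_logGreenSphereValue (n : ℤ) :
    ∑' k, ((1 - (p : ℝ)⁻¹) * (p : ℝ) ^ (-k)) • logGreenSphereValue p n k = 0 := by
  have hp : (p : ℂ) ≠ 0 := mod_cast (Fact.out : p.Prime).ne_zero
  refine tsum_eq_zero_of_comp_equiv_eq_neg (Equiv.subLeft (2 * n)) fun k ↦ ?_
  have hexp : (p : ℂ) ^ (-(2 * n - k)) * (p : ℂ) ^ (2 * min (2 * n - k) n) =
      (p : ℂ) ^ (-k) * (p : ℂ) ^ (2 * min k n) := by
    rw [← zpow_add₀ hp, ← zpow_add₀ hp]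
    congr 1
    omega
  simp only [Equiv.subLeft_apply, logGreenSphereValue, Complex.real_smul]
  push_cast
  linear_combination (1 - (p : ℂ)⁻¹) * ((k : ℂ) - n) * hexp

end LogGreen

/-- for `v ≠ 0` and `s` with `p^{s-1} = 1` (i.e. `s = 1 + 2πik/ln p`), the
function `u ↦ (log_p|u| - log_p|v|)/|u-v|^{s+1}` (with `log_p|u|_p = -v_p(u)`) is integrable
on `ℚ_p` and its integral vanishes. -/
theorem vladimirov_annihilates_log_green (v : ℚ_[p]) (hv : v ≠ 0) (s : ℂ)
    (hs : (p : ℂ) ^ (s - 1) = 1) :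
    Integrable (fun u : ℚ_[p] =>
      (((-u.valuation : ℤ) : ℂ) - ((-v.valuation : ℤ) : ℂ)) / (‖u - v‖ : ℂ) ^ (s + 1))
      (padicHaar p) ∧
    (∫ u, ((((-u.valuation : ℤ) : ℂ) - ((-v.valuation : ℤ) : ℂ)) / (‖u - v‖ : ℂ) ^ (s + 1))
      ∂(padicHaar p)) = 0 := by
  have hF : (fun u : ℚ_[p] =>
      (((-u.valuation : ℤ) : ℂ) - ((-v.valuation : ℤ) : ℂ)) / (‖u - v‖ : ℂ) ^ (s + 1))
      =ᵐ[padicHaar p] fun u ↦ logGreenSphereValue p v.valuation u.valuation := by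
    have h0 : ∀ᵐ u ∂padicHaar p, u ≠ 0 := compl_mem_ae_iff.mpr (measure_singleton 0)
    exact h0.mono fun u hu ↦ integrand_eq_logGreenSphereValue hv hu hs
  rw [integrable_congr hF, integral_congr_ae hF,
    integrable_comp_iff_summable Padic.measurable_valuation padicHaar_valuation_preimage_ne_top,
    integral_comp_eq_tsum Padic.measurable_valuation padicHaar_valuation_preimage_ne_top]
  simp only [padicHaar_real_valuation_preimage]
  exact ⟨summable_logGreenSphereValue _, tsum_logGreenSphereValue _⟩
end
end

section
/- For every s ∈ ℂ with 0 < Re(s) < 1, the improper Fourier integral of the Archimedean quasi-character |x|^{s−1} converges and equals the Archimedean Gelfand–Graev Gamma function: lim_{R→∞} ∫_{−R}^{R} |x|^{s−1}·e^{2πi x} dx = 2·cos(πs/2)·(2π)^{−s}·Γ(s), where |x|^{s−1} := exp((s−1)·log|x|) for real x ≠ 0 and Γ denotes the Euler Gamma function. -/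
/-!
With `z = ∓2πi`, the two halves of the integral are `∫₀^R t^(s-1) e^(-zt) dt`. For `re z > 0`
the integral over `(0, ∞)` is `Γ(s) z^(-s)`: both sides are holomorphic in `z` and agree for real
`z > 0`. For `re z = 0` it converges only as an improper integral, but integrating the tail over
`[1, ∞)` by parts once turns it into an expression that is continuous on the closed half-plane
minus `0`, so the identity extends to the boundary. Finally
`(2πi)^(-s) + (-2πi)^(-s) = 2 cos(πs/2) (2π)^(-s)`.
-/

open Real MeasureTheory Set Filter Topology

noncomputable section

namespace ArchimedeanGamma

open Complex

variable {s w z : ℂ} {t : ℝ}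

lemma norm_cpow_mul_cexp_neg_mul (w z : ℂ) (ht : 0 < t) :
    ‖(t : ℂ) ^ w * cexp (-(z * t))‖ = t ^ w.re * rexp (-z.re * t) := by
  rw [norm_mul, norm_exp, norm_cpow_eq_rpow_re_of_pos ht]
  simp

lemma norm_cpow_mul_cexp_neg_mul_le (hz : 0 ≤ z.re) (ht : 0 < t) :
    ‖(t : ℂ) ^ w * cexp (-(z * t))‖ ≤ t ^ w.re := by
  rw [norm_cpow_mul_cexp_neg_mul w z ht]
  refine mul_le_of_le_one_right (rpow_nonneg ht.le _) (Real.exp_le_one_iff.2 ?_)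
  nlinarith

lemma continuousOn_cpow_mul_cexp_neg_mul (w z : ℂ) :
    ContinuousOn (fun t : ℝ => (t : ℂ) ^ w * cexp (-(z * t))) (Ioi 0) := by
  intro t ht
  refine ContinuousAt.continuousWithinAt (ContinuousAt.mul ?_ (by fun_prop))
  exact (continuousAt_cpow_const (ofReal_mem_slitPlane.2 ht)).comp continuous_ofReal.continuousAt

lemma aestronglyMeasurable_cpow_mul_cexp_neg_mul {S : Set ℝ} (hS : MeasurableSet S)
    (hS0 : S ⊆ Ioi 0) (w z : ℂ) :
    AEStronglyMeasurable (fun t : ℝ => (t : ℂ) ^ w * cexp (-(z * t))) (volume.restrict S) :=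
  ((continuousOn_cpow_mul_cexp_neg_mul w z).mono hS0).aestronglyMeasurable hS

lemma integrableOn_cpow_mul_cexp_neg_mul {S : Set ℝ} (hS : MeasurableSet S) (hS0 : S ⊆ Ioi 0)
    (hint : IntegrableOn (fun t : ℝ => t ^ w.re) S) (hz : 0 ≤ z.re) :
    IntegrableOn (fun t : ℝ => (t : ℂ) ^ w * cexp (-(z * t))) S := by
  refine hint.mono' (aestronglyMeasurable_cpow_mul_cexp_neg_mul hS hS0 w z) ?_
  filter_upwards [ae_restrict_mem hS] with t ht
  exact norm_cpow_mul_cexp_neg_mul_le hz (hS0 ht)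

lemma intervalIntegrable_cpow_mul_cexp_neg_mul (hw : -1 < w.re) (hz : 0 ≤ z.re) {R : ℝ}
    (hR : 0 ≤ R) :
    IntervalIntegrable (fun t : ℝ => (t : ℂ) ^ w * cexp (-(z * t))) volume 0 R := by
  rw [intervalIntegrable_iff_integrableOn_Ioc_of_le hR]
  refine integrableOn_cpow_mul_cexp_neg_mul measurableSet_Ioc (fun t ht => ht.1) ?_ hz
  rw [← intervalIntegrable_iff_integrableOn_Ioc_of_le hR]
  exact intervalIntegral.intervalIntegrable_rpow' hw

lemma integrableOn_Ioi_one_cpow_mul_cexp_neg_mul (hw : w.re < -1) (hz : 0 ≤ z.re) :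
    IntegrableOn (fun t : ℝ => (t : ℂ) ^ w * cexp (-(z * t))) (Ioi 1) :=
  integrableOn_cpow_mul_cexp_neg_mul measurableSet_Ioi (Ioi_subset_Ioi zero_le_one)
    (integrableOn_Ioi_rpow_of_lt hw one_pos) hz

lemma integrableOn_Ioi_cpow_mul_cexp_neg_mul (hw : -1 < w.re) (hz : 0 < z.re) :
    IntegrableOn (fun t : ℝ => (t : ℂ) ^ w * cexp (-(z * t))) (Ioi 0) := by
  have hbound : IntegrableOn (fun t : ℝ => t ^ w.re * rexp (-z.re * t)) (Ioi 0) := by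
    simpa using integrableOn_rpow_mul_exp_neg_mul_rpow hw one_pos hz
  refine hbound.mono'
    (aestronglyMeasurable_cpow_mul_cexp_neg_mul measurableSet_Ioi subset_rfl w z) ?_
  filter_upwards [ae_restrict_mem measurableSet_Ioi] with t ht
  exact (norm_cpow_mul_cexp_neg_mul w z ht).le

lemma continuousOn_integral_cpow_mul_cexp_neg_mul {S : Set ℝ} (hS : MeasurableSet S)
    (hS0 : S ⊆ Ioi 0) (hint : IntegrableOn (fun t : ℝ => t ^ w.re) S) :
    ContinuousOn (fun z : ℂ => ∫ t in S, (t : ℂ) ^ w * cexp (-(z * t))) {z | 0 ≤ z.re} := by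
  refine continuousOn_of_dominated
    (fun z _ => aestronglyMeasurable_cpow_mul_cexp_neg_mul hS hS0 w z) (fun z hz => ?_) hint
    (Eventually.of_forall fun t => Continuous.continuousOn (by fun_prop))
  filter_upwards [ae_restrict_mem hS] with t ht
  exact norm_cpow_mul_cexp_neg_mul_le hz (hS0 ht)

lemma hasDerivAt_cpow_mul_cexp_neg_mul (ht : 0 < t) (w z : ℂ) :
    HasDerivAt (fun z : ℂ => (t : ℂ) ^ (w - 1) * cexp (-(z * t)))
      (-((t : ℂ) ^ w * cexp (-(z * t)))) z := by
  have ht' : (t : ℂ) ≠ 0 := ofReal_ne_zero.2 ht.ne'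
  refine (((hasDerivAt_mul_const (t : ℂ)).neg.cexp).const_mul _).congr_deriv ?_
  rw [cpow_sub _ _ ht', cpow_one]
  simp only [Pi.neg_apply]
  field_simp

lemma differentiableOn_integral_Ioi_cpow_mul_cexp_neg_mul (hs : 0 < s.re) :
    DifferentiableOn ℂ
      (fun z : ℂ => ∫ t : ℝ in Ioi 0, (t : ℂ) ^ (s - 1) * cexp (-(z * t)))
      {z | 0 < z.re} := by
  intro z₀ (hz₀ : 0 < z₀.re)
  set δ := z₀.re / 2
  have hnhds : {z : ℂ | δ < z.re} ∈ 𝓝 z₀ :=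
    (isOpen_lt continuous_const continuous_re).mem_nhds (show δ < z₀.re from half_lt_self hz₀)
  have hbound : IntegrableOn (fun t : ℝ => t ^ s.re * rexp (-δ * t)) (Ioi 0) := by
    simpa using integrableOn_rpow_mul_exp_neg_mul_rpow (by linarith : -1 < s.re) one_pos
      (half_pos hz₀)
  have hmeas := aestronglyMeasurable_cpow_mul_cexp_neg_mul measurableSet_Ioi subset_rfl
  refine (hasDerivAt_integral_of_dominated_loc_of_deriv_le hnhds
    (F' := fun z t => -((t : ℂ) ^ s * cexp (-(z * t))))
    (Eventually.of_forall fun z => hmeas (s - 1) z)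
    (integrableOn_Ioi_cpow_mul_cexp_neg_mul (by simpa using hs) hz₀) (hmeas s z₀).neg ?_ hbound
    ?_).2.differentiableAt.differentiableWithinAt
  · filter_upwards [ae_restrict_mem measurableSet_Ioi] with t (ht : 0 < t) z (hz : δ < z.re)
    rw [norm_neg, norm_cpow_mul_cexp_neg_mul s z ht]
    gcongr
  · filter_upwards [ae_restrict_mem measurableSet_Ioi] with t ht z _
    exact hasDerivAt_cpow_mul_cexp_neg_mul ht s z

lemma integral_Ioi_cpow_mul_cexp_neg_mul (hs : 0 < s.re) (hz : 0 < z.re) :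
    ∫ t : ℝ in Ioi 0, (t : ℂ) ^ (s - 1) * cexp (-(z * t)) = Complex.Gamma s * z ^ (-s) := by
  have hU : IsOpen {z : ℂ | 0 < z.re} := isOpen_lt continuous_const continuous_re
  have hrhs : DifferentiableOn ℂ (fun z : ℂ => Complex.Gamma s * z ^ (-s)) {z | 0 < z.re} :=
    fun z hz => ((differentiableAt_id.cpow (differentiableAt_const _) (Or.inl hz)).const_mul
      _).differentiableWithinAt
  have hreal : ∀ r : ℝ, 0 < r →
      ∫ t : ℝ in Ioi 0, (t : ℂ) ^ (s - 1) * cexp (-(r * t)) =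
        Complex.Gamma s * (r : ℂ) ^ (-s) := by
    intro r hr
    rw [integral_cpow_mul_exp_neg_mul_Ioi hs hr, one_div, inv_cpow _ _ (by
      rw [arg_ofReal_of_nonneg hr.le]; exact pi_ne_zero.symm), ← cpow_neg, mul_comm]
  have hfreq : ∃ᶠ w in 𝓝[≠] (1 : ℂ),
      ∫ t : ℝ in Ioi 0, (t : ℂ) ^ (s - 1) * cexp (-(w * t)) = Complex.Gamma s * w ^ (-s) := by
    have hmap : Tendsto ((↑) : ℝ → ℂ) (𝓝[≠] 1) (𝓝[≠] 1) :=
      continuous_ofReal.continuousWithinAt.tendsto_nhdsWithin fun r hr => by simpa using hr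
    refine hmap.frequently (Eventually.frequently ?_)
    filter_upwards [nhdsWithin_le_nhds (lt_mem_nhds one_pos)] with r hr using hreal r hr
  exact ((differentiableOn_integral_Ioi_cpow_mul_cexp_neg_mul hs).analyticOnNhd hU)
    |>.eqOn_of_preconnected_of_frequently_eq (hrhs.analyticOnNhd hU)
      (convex_halfSpace_re_gt 0).isPreconnected (by simp) hfreq hz

lemma integral_cpow_mul_cexp_neg_mul_eq_by_parts (hz : z ≠ 0) {a b : ℝ} (ha : 0 < a)
    (hab : a ≤ b) :
    ∫ t in a..b, (t : ℂ) ^ w * cexp (-(z * t)) =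
      (a : ℂ) ^ w * cexp (-(z * a)) / z - (b : ℂ) ^ w * cexp (-(z * b)) / z +
        w / z * ∫ t in a..b, (t : ℂ) ^ (w - 1) * cexp (-(z * t)) := by
  have hpos : ∀ t ∈ uIcc a b, 0 < t := fun t ht => ha.trans_le (uIcc_of_le hab ▸ ht).1
  have hcpow : ∀ t ∈ uIcc a b, ContinuousAt (fun t : ℝ => (t : ℂ) ^ (w - 1)) t :=
    fun t ht =>
    (continuousAt_cpow_const (ofReal_mem_slitPlane.2 (hpos t ht))).comp
      continuous_ofReal.continuousAt
  have hu : ∀ t ∈ uIcc a b,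
      HasDerivAt (fun t : ℝ => (t : ℂ) ^ w) (w * (t : ℂ) ^ (w - 1)) t :=
    fun t ht =>
      (hasStrictDerivAt_cpow_const (ofReal_mem_slitPlane.2 (hpos t ht))).hasDerivAt.comp_ofReal
  have hv : ∀ t ∈ uIcc a b,
      HasDerivAt (fun t : ℝ => -(cexp (-(z * t)) / z)) (cexp (-(z * t))) t := by
    intro t _
    refine HasDerivAt.comp_ofReal (e := fun y : ℂ => -(cexp (-(z * y)) / z)) ?_
    refine ((((hasDerivAt_id (t : ℂ)).const_mul z).neg.cexp).div_const z).neg.congr_deriv ?_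
    simp only [Pi.neg_apply, id]
    field_simp
  rw [intervalIntegral.integral_mul_deriv_eq_deriv_mul hu hv
    (ContinuousOn.intervalIntegrable fun t ht =>
      (continuousAt_const.mul (hcpow t ht)).continuousWithinAt)
    (Continuous.intervalIntegrable (by fun_prop) a b)]
  have hintegrand : ∀ t : ℝ, w * (t : ℂ) ^ (w - 1) * -(cexp (-(z * t)) / z) =
      -(w / z) * ((t : ℂ) ^ (w - 1) * cexp (-(z * t))) := fun t => by ring
  simp_rw [hintegrand, intervalIntegral.integral_const_mul]
  ring

/-- `∫₀^∞ t^(s-1) e^(-zt) dt` with its tail over `[1, ∞)` integrated by parts once: for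
`0 < re s < 1` this converges on the whole closed half-plane `0 ≤ re z`, `z ≠ 0`. -/
def regularizedGammaIntegral (s z : ℂ) : ℂ :=
  (∫ t in (0 : ℝ)..1, (t : ℂ) ^ (s - 1) * cexp (-(z * t))) + cexp (-z) / z +
    (s - 1) / z * ∫ t in Ioi (1 : ℝ), (t : ℂ) ^ (s - 2) * cexp (-(z * t))

lemma tendsto_integral_cpow_mul_cexp_neg_mul_regularizedGammaIntegral (hs0 : 0 < s.re)
    (hs1 : s.re < 1) (hz : 0 ≤ z.re) (hz0 : z ≠ 0) :
    Tendsto (fun R : ℝ => ∫ t in (0 : ℝ)..R, (t : ℂ) ^ (s - 1) * cexp (-(z * t))) atTop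
      (𝓝 (regularizedGammaIntegral s z)) := by
  have hw : -1 < (s - 1).re := by simp [hs0]
  have hboundary :
      Tendsto (fun R : ℝ => (R : ℂ) ^ (s - 1) * cexp (-(z * R)) / z) atTop (𝓝 0) := by
    refine squeeze_zero_norm' ?_ (by simpa using
      (tendsto_rpow_neg_atTop (by linarith : 0 < 1 - s.re)).div_const ‖z‖)
    filter_upwards [eventually_gt_atTop 0] with R hR
    rw [norm_div]
    exact div_le_div_of_nonneg_right (norm_cpow_mul_cexp_neg_mul_le hz hR) (norm_nonneg z)
  have htail := intervalIntegral_tendsto_integral_Ioi 1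
    (integrableOn_Ioi_one_cpow_mul_cexp_neg_mul (w := s - 2) (by simp; linarith) hz) tendsto_id
  have hlim := (tendsto_const_nhds
    (x := ∫ t in (0 : ℝ)..1, (t : ℂ) ^ (s - 1) * cexp (-(z * t)))).add
      (((tendsto_const_nhds (x := cexp (-z) / z)).sub hboundary).add
        (htail.const_mul ((s - 1) / z)))
  rw [sub_zero, ← add_assoc] at hlim
  refine hlim.congr' ?_
  filter_upwards [eventually_ge_atTop 1] with R hR
  have h01 := intervalIntegrable_cpow_mul_cexp_neg_mul hw hz zero_le_one
  have h0R := intervalIntegrable_cpow_mul_cexp_neg_mul hw hz (zero_le_one.trans hR)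
  rw [← intervalIntegral.integral_add_adjacent_intervals h01 (h01.symm.trans h0R),
    integral_cpow_mul_cexp_neg_mul_eq_by_parts hz0 one_pos hR, show s - 1 - 1 = s - 2 by ring]
  simp only [ofReal_one, one_cpow, one_mul, mul_one, id]

lemma continuousOn_regularizedGammaIntegral (hs0 : 0 < s.re) (hs1 : s.re < 1) :
    ContinuousOn (regularizedGammaIntegral s) ({z | 0 ≤ z.re} \ {0}) := by
  have hhead : ContinuousOn
      (fun z : ℂ => ∫ t in (0 : ℝ)..1, (t : ℂ) ^ (s - 1) * cexp (-(z * t)))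
      {z | 0 ≤ z.re} := by
    simp_rw [intervalIntegral.integral_of_le zero_le_one]
    refine continuousOn_integral_cpow_mul_cexp_neg_mul measurableSet_Ioc (fun t ht => ht.1) ?_
    rw [← intervalIntegrable_iff_integrableOn_Ioc_of_le zero_le_one]
    exact intervalIntegral.intervalIntegrable_rpow' (by simp [hs0])
  have htail := continuousOn_integral_cpow_mul_cexp_neg_mul (w := s - 2) measurableSet_Ioi
    (Ioi_subset_Ioi zero_le_one) (integrableOn_Ioi_rpow_of_lt (by simp; linarith) one_pos)
  have hne : ∀ z ∈ {z : ℂ | 0 ≤ z.re} \ {0}, z ≠ 0 := fun z hz => hz.2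
  exact ((hhead.mono sdiff_subset).add
    ((Continuous.continuousOn (by fun_prop)).div continuousOn_id hne)).add
      ((continuousOn_const.div continuousOn_id hne).mul (htail.mono sdiff_subset))

lemma mem_slitPlane_of_re_nonneg (hz : 0 ≤ z.re) (hz0 : z ≠ 0) : z ∈ slitPlane := by
  rcases hz.lt_or_eq with hre | hre
  · exact .inl hre
  · exact .inr fun him => hz0 (Complex.ext hre.symm him)

lemma regularizedGammaIntegral_eq (hs0 : 0 < s.re) (hs1 : s.re < 1) (hz : 0 ≤ z.re)
    (hz0 : z ≠ 0) : regularizedGammaIntegral s z = Complex.Gamma s * z ^ (-s) := by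
  have hne : ∀ z : ℂ, 0 < z.re → z ≠ 0 := fun z hz h => by simp [h] at hz
  have hopen : EqOn (regularizedGammaIntegral s) (fun z => Complex.Gamma s * z ^ (-s))
      {z | 0 < z.re} := by
    intro z (hz : 0 < z.re)
    have habs := intervalIntegral_tendsto_integral_Ioi 0
      (integrableOn_Ioi_cpow_mul_cexp_neg_mul (w := s - 1) (by simpa using hs0) hz) tendsto_id
    rw [integral_Ioi_cpow_mul_cexp_neg_mul hs0 hz] at habs
    exact tendsto_nhds_unique (tendsto_integral_cpow_mul_cexp_neg_mul_regularizedGammaIntegral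
      hs0 hs1 hz.le (hne z hz)) habs
  refine hopen.of_subset_closure (continuousOn_regularizedGammaIntegral hs0 hs1)
    (fun z hz => ((continuousAt_cpow_const (mem_slitPlane_of_re_nonneg hz.1 hz.2)).const_mul
      _).continuousWithinAt) (fun z (hz : 0 < z.re) => ⟨hz.le, hne z hz⟩)
    (closure_setOfPred_lt_re 0 ▸ sdiff_subset) ⟨hz, hz0⟩

theorem tendsto_integral_cpow_mul_cexp_neg_mul (hs0 : 0 < s.re) (hs1 : s.re < 1)
    (hz : 0 ≤ z.re) (hz0 : z ≠ 0) :
    Tendsto (fun R : ℝ => ∫ t in (0 : ℝ)..R, (t : ℂ) ^ (s - 1) * cexp (-(z * t))) atTop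
      (𝓝 (Complex.Gamma s * z ^ (-s))) :=
  regularizedGammaIntegral_eq hs0 hs1 hz hz0 ▸
    tendsto_integral_cpow_mul_cexp_neg_mul_regularizedGammaIntegral hs0 hs1 hz hz0

lemma ofReal_mul_I_cpow_add_neg_ofReal_mul_I_cpow {r : ℝ} (hr : 0 < r) (w : ℂ) :
    ((r : ℂ) * I) ^ w + (-((r : ℂ) * I)) ^ w =
      2 * Complex.cos (π * w / 2) * (r : ℂ) ^ w := by
  have hr' : (r : ℂ) ≠ 0 := ofReal_ne_zero.2 hr.ne'
  rw [← mul_neg, cpow_def_of_ne_zero (mul_ne_zero hr' I_ne_zero),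
    cpow_def_of_ne_zero (mul_ne_zero hr' (neg_ne_zero.2 I_ne_zero)), cpow_def_of_ne_zero hr',
    log_ofReal_mul hr I_ne_zero, log_ofReal_mul hr (neg_ne_zero.2 I_ne_zero), log_I, log_neg_I,
    ofReal_log hr.le, Complex.cos, add_mul, add_mul, Complex.exp_add, Complex.exp_add]
  ring_nf

lemma integral_neg_self_eq_add_of_eqOn {E : Type*} [NormedAddCommGroup E] [NormedSpace ℝ E]
    {f g h : ℝ → E} {R : ℝ} (hR : 0 ≤ R) (hg : IntervalIntegrable g volume 0 R)
    (hh : IntervalIntegrable h volume 0 R) (hfg : EqOn f g (Icc 0 R))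
    (hfh : EqOn (fun x => f (-x)) h (Icc 0 R)) :
    ∫ x in -R..R, f x = (∫ x in 0..R, g x) + ∫ x in 0..R, h x := by
  rw [← uIcc_of_le hR] at hfg hfh
  have hneg : IntervalIntegrable f volume (-R) 0 := by
    simpa using ((IntervalIntegrable.iff_comp_neg (f := fun x => f (-x))).1
      (hh.congr (hfh.symm.mono uIoc_subset_uIcc))).symm
  rw [← intervalIntegral.integral_add_adjacent_intervals hneg
      (hg.congr (hfg.symm.mono uIoc_subset_uIcc)),
    ← intervalIntegral.integral_congr hfg, ← intervalIntegral.integral_congr hfh,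
    intervalIntegral.integral_comp_neg, neg_zero, add_comm]

end ArchimedeanGamma

open ArchimedeanGamma

/-- for `0 < Re(s) < 1`, the improper Fourier integral of the Archimedean
quasi-character `|x|^{s-1}` converges to the Archimedean Gelfand–Graev Gamma function:
`lim_{R→∞} ∫_{-R}^{R} |x|^{s-1}·e^{2πix} dx = 2·cos(πs/2)·(2π)^{-s}·Γ(s)`. -/
theorem archimedean_gamma_as_fourier_integral (s : ℂ) (hs0 : 0 < s.re) (hs1 : s.re < 1) :
    Filter.Tendsto
      (fun R : ℝ => ∫ x in (-R)..R,
        ((|x| : ℝ) : ℂ) ^ (s - 1) * Complex.exp (2 * (π : ℂ) * Complex.I * (x : ℂ)))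
      Filter.atTop
      (nhds (2 * Complex.cos ((π : ℂ) * s / 2) * (2 * (π : ℂ)) ^ (-s) * Complex.Gamma s)) := by
  set z : ℂ := 2 * (π : ℂ) * Complex.I
  have hz' : z = ((2 * π : ℝ) : ℂ) * Complex.I := by push_cast; rfl
  have hre : z.re = 0 := by simp [hz']
  have hz0 : z ≠ 0 := by simp [hz', pi_ne_zero]
  have hvalue : Complex.Gamma s * (-z) ^ (-s) + Complex.Gamma s * z ^ (-s) =
      2 * Complex.cos (π * s / 2) * (2 * π) ^ (-s) * Complex.Gamma s := by
    rw [← mul_add, add_comm, hz', ofReal_mul_I_cpow_add_neg_ofReal_mul_I_cpow (by positivity),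
      mul_neg, neg_div, Complex.cos_neg]
    push_cast
    ring
  rw [← hvalue]
  refine ((tendsto_integral_cpow_mul_cexp_neg_mul hs0 hs1 (by simp [hre])
    (neg_ne_zero.2 hz0)).add (tendsto_integral_cpow_mul_cexp_neg_mul hs0 hs1 hre.ge hz0)).congr' ?_
  filter_upwards [eventually_ge_atTop 0] with R hR
  have hw : -1 < (s - 1).re := by simp [hs0]
  refine (integral_neg_self_eq_add_of_eqOn hR
    (intervalIntegrable_cpow_mul_cexp_neg_mul hw (by simp [hre]) hR)
    (intervalIntegrable_cpow_mul_cexp_neg_mul hw hre.ge hR)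
    (fun x hx => by simp [abs_of_nonneg hx.1]) (fun x hx => by simp [abs_of_nonneg hx.1])).symm

end
end
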